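/- arXiv:1412.5828 — 2 statements merged into one kernel-verified Lean document; each statement's English description precedes it below -/
import Mathlib

section
/- Let (X,d) be a Hilbert geometry with base point o ∈ X. Let ℓ₁, ℓ₂ : [0,∞) → X be two distinct rays from o (isometric embeddings whose images lie in Euclidean lines, with ℓᵢ(0) = o). Then for 0 < s < t, d(ℓ₁(s), ℓ₂(s)) ≤ d(ℓ₁(t), ℓ₂(t)). -/
open Real

/-- `d` is the Hilbert metric of the bounded convex domain `X ⊆ ℝⁿ`:
`d x x = 0` on `X`, and for distinct `x, y ∈ X`, whenever `x', y'` are the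
boundary points of the chord through `x` and `y` with `x', x, y, y'` in this
order, `d x y` is the logarithm of the cross ratio. -/
def IsHilbertMetric {n : ℕ} (X : Set (EuclideanSpace ℝ (Fin n)))
    (d : EuclideanSpace ℝ (Fin n) → EuclideanSpace ℝ (Fin n) → ℝ) : Prop :=
  (∀ x ∈ X, d x x = 0) ∧
  ∀ x ∈ X, ∀ y ∈ X, x ≠ y → ∀ x' ∈ frontier X, ∀ y' ∈ frontier X,
    x ∈ segment ℝ x' y → y ∈ segment ℝ x y' →
    d x y = Real.log ((dist x y' * dist y x') / (dist x x' * dist y y'))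

/-- `ℓ` is a ray from `o` in the Hilbert geometry `(X,d)`: an isometric
embedding of `[0,∞)` into `(X,d)` with `ℓ 0 = o` whose image lies in a
Euclidean line. -/
def IsHilbertRay {n : ℕ} (X : Set (EuclideanSpace ℝ (Fin n)))
    (d : EuclideanSpace ℝ (Fin n) → EuclideanSpace ℝ (Fin n) → ℝ)
    (o : EuclideanSpace ℝ (Fin n)) (ℓ : ℝ → EuclideanSpace ℝ (Fin n)) : Prop :=
  ℓ 0 = o ∧ (∀ t : ℝ, 0 ≤ t → ℓ t ∈ X) ∧
  (∀ s t : ℝ, 0 ≤ s → 0 ≤ t → d (ℓ s) (ℓ t) = |s - t|) ∧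
  ∃ v : EuclideanSpace ℝ (Fin n), ∀ t : ℝ, 0 ≤ t → ∃ c : ℝ, ℓ t = o + c • v

open Set

variable {n : ℕ} {X : Set (EuclideanSpace ℝ (Fin n))}

lemma chord_exists (hconv : Convex ℝ X) (hopen : IsOpen X) (hbdd : Bornology.IsBounded X)
    {x v : EuclideanSpace ℝ (Fin n)} (hx : x ∈ X) (hv : v ≠ 0) :
    ∃ u w : ℝ, u < 0 ∧ 0 < w ∧ (∀ r : ℝ, x + r • v ∈ X ↔ u < r ∧ r < w) ∧
      x + u • v ∈ frontier X ∧ x + w • v ∈ frontier X := by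
  set I : Set ℝ := {r : ℝ | x + r • v ∈ X} with hIdef
  have hIo : IsOpen I := hopen.preimage (by continuity)
  have hI0 : (0:ℝ) ∈ I := by simp [hIdef, hx]
  have hInon : I.Nonempty := ⟨0, hI0⟩
  have hIconv : Convex ℝ I := by
    intro r₁ h₁ r₂ h₂ p q hp hq hpq
    have heq : x + (p * r₁ + q * r₂) • v = p • (x + r₁ • v) + q • (x + r₂ • v) := by
      have : (1:ℝ) • x = (p + q) • x := by rw [hpq]
      rw [one_smul] at this
      nth_rewrite 1 [this]
      module
    show x + (p * r₁ + q * r₂) • v ∈ X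
    rw [heq]
    exact hconv h₁ h₂ hp hq hpq
  obtain ⟨C, hC⟩ := isBounded_iff_forall_norm_le.mp hbdd
  have hvn : (0:ℝ) < ‖v‖ := norm_pos_iff.mpr hv
  have hbound : ∀ r ∈ I, |r| ≤ (C + ‖x‖) / ‖v‖ := by
    intro r hr
    rw [le_div_iff₀ hvn]
    have h1 : ‖x + r • v‖ ≤ C := hC _ hr
    have h2 : |r| * ‖v‖ = ‖(x + r • v) - x‖ := by
      rw [add_sub_cancel_left, norm_smul, Real.norm_eq_abs]
    rw [h2]
    calc ‖(x + r • v) - x‖ ≤ ‖x + r • v‖ + ‖x‖ := norm_sub_le _ _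
      _ ≤ C + ‖x‖ := by linarith
  have hbdda : BddAbove I := ⟨(C + ‖x‖) / ‖v‖, fun r hr => (le_abs_self r).trans (hbound r hr)⟩
  have hbddb : BddBelow I := ⟨-((C + ‖x‖) / ‖v‖), fun r hr => by
    have := hbound r hr; have := neg_abs_le r; linarith⟩
  set u := sInf I with hu
  set w := sSup I with hw
  obtain ⟨ε, hε, hball⟩ := Metric.isOpen_iff.mp hIo 0 hI0
  rw [Real.ball_eq_Ioo] at hball
  have hmem_lt : ∀ r ∈ I, u < r ∧ r < w := by
    intro r hr
    obtain ⟨δ, hδ, hballr⟩ := Metric.isOpen_iff.mp hIo r hr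
    rw [Real.ball_eq_Ioo] at hballr
    constructor
    · have h1 : r - δ/2 ∈ I := hballr ⟨by linarith, by linarith⟩
      have := csInf_le hbddb h1
      linarith
    · have h1 : r + δ/2 ∈ I := hballr ⟨by linarith, by linarith⟩
      have := le_csSup hbdda h1
      linarith
  have hu0 : u < 0 := by
    have h1 : -(ε/2) ∈ I := hball ⟨by linarith, by linarith⟩
    have := (hmem_lt _ h1).1
    have h2 := csInf_le hbddb h1
    linarith
  have hw0 : 0 < w := by
    have h1 : ε/2 ∈ I := hball ⟨by linarith, by linarith⟩
    have h2 := le_csSup hbdda h1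
    linarith
  have hmem_iff : ∀ r : ℝ, x + r • v ∈ X ↔ u < r ∧ r < w := by
    intro r
    constructor
    · exact fun hr => hmem_lt r hr
    · rintro ⟨h1, h2⟩
      obtain ⟨r₁, hr₁I, hr₁⟩ := exists_lt_of_csInf_lt hInon h1
      obtain ⟨r₂, hr₂I, hr₂⟩ := exists_lt_of_lt_csSup hInon h2
      exact hIconv.ordConnected.out hr₁I hr₂I ⟨hr₁.le, hr₂.le⟩
  have hcont : Continuous (fun r : ℝ => x + r • v) :=
    continuous_const.add (continuous_id.smul continuous_const)
  have hfront : ∀ r : ℝ, r ∈ closure I → r ∉ I → x + r • v ∈ frontier X := by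
    intro r hrc hrn
    rw [hopen.frontier_eq]
    constructor
    · exact map_mem_closure (f := fun r : ℝ => x + r • v) (t := X) hcont hrc (fun y hy => hy)
    · exact hrn
  refine ⟨u, w, hu0, hw0, hmem_iff, ?_, ?_⟩
  · refine hfront u (csInf_mem_closure hInon hbddb) (fun hmem => ?_)
    exact absurd (hmem_lt u hmem).1 (lt_irrefl u)
  · refine hfront w (csSup_mem_closure hInon hbdda) (fun hmem => ?_)
    exact absurd (hmem_lt w hmem).2 (lt_irrefl w)

lemma dist_formula {d : EuclideanSpace ℝ (Fin n) → EuclideanSpace ℝ (Fin n) → ℝ}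
    (hd : IsHilbertMetric X d) {p q : EuclideanSpace ℝ (Fin n)}
    (hp : p ∈ X) (hq : q ∈ X) (hne : p ≠ q) {u w : ℝ} (hu : u < 0) (hw : 1 < w)
    (hfu : p + u • (q - p) ∈ frontier X) (hfw : p + w • (q - p) ∈ frontier X) :
    d p q = Real.log ((w * (1 - u)) / ((-u) * (w - 1))) := by
  set x' := p + u • (q - p) with hx'
  set y' := p + w • (q - p) with hy'
  have hseg1 : p ∈ segment ℝ x' q := by
    have h1u : (0:ℝ) < 1 - u := by linarith
    refine ⟨1/(1-u), (-u)/(1-u), by positivity, le_of_lt (div_pos (by linarith) h1u),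
      by field_simp; ring, ?_⟩
    rw [hx']
    match_scalars <;> (field_simp; try ring)
  have hseg2 : q ∈ segment ℝ p y' := by
    refine ⟨1 - 1/w, 1/w, by rw [sub_nonneg, div_le_one (by linarith)]; linarith,
      by positivity, by ring, ?_⟩
    rw [hy']
    match_scalars <;> (field_simp; try ring)
  have key := hd.2 p hp q hq hne x' hfu y' hfw hseg1 hseg2
  have hqp : ‖q - p‖ ≠ 0 := by
    simpa [sub_eq_zero] using (Ne.symm hne)
  have d1 : dist p y' = w * ‖q - p‖ := by
    rw [hy', dist_eq_norm]
    have : p - (p + w • (q - p)) = (-w) • (q - p) := by module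
    rw [this, norm_smul, Real.norm_eq_abs, abs_of_neg (by linarith : -w < 0)]
    ring
  have d2 : dist q x' = (1 - u) * ‖q - p‖ := by
    rw [hx', dist_eq_norm]
    have : q - (p + u • (q - p)) = (1 - u) • (q - p) := by module
    rw [this, norm_smul, Real.norm_eq_abs, abs_of_pos (by linarith : (0:ℝ) < 1 - u)]
  have d3 : dist p x' = (-u) * ‖q - p‖ := by
    rw [hx', dist_eq_norm]
    have : p - (p + u • (q - p)) = (-u) • (q - p) := by module
    rw [this, norm_smul, Real.norm_eq_abs, abs_of_pos (by linarith : (0:ℝ) < -u)]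
  have d4 : dist q y' = (w - 1) * ‖q - p‖ := by
    rw [hy', dist_eq_norm]
    have : q - (p + w • (q - p)) = (1 - w) • (q - p) := by module
    rw [this, norm_smul, Real.norm_eq_abs, abs_of_neg (by linarith : 1 - w < 0)]
    ring
  have hqp' : (0:ℝ) < ‖q - p‖ := lt_of_le_of_ne (norm_nonneg _) (Ne.symm hqp)
  rw [key, d1, d2, d3, d4]
  congr 1
  have hne1 : -u * ‖q - p‖ * ((w - 1) * ‖q - p‖) ≠ 0 := by
    have : (0:ℝ) < -u * ‖q - p‖ * ((w - 1) * ‖q - p‖) := by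
      apply mul_pos (mul_pos (by linarith) hqp') (mul_pos (by linarith) hqp')
    exact this.ne'
  have hne2 : -u * (w - 1) ≠ 0 := by
    have : (0:ℝ) < -u * (w - 1) := mul_pos (by linarith) (by linarith)
    exact this.ne'
  rw [div_eq_div_iff hne1 hne2]
  ring

lemma dist_line {d : EuclideanSpace ℝ (Fin n) → EuclideanSpace ℝ (Fin n) → ℝ}
    (hd : IsHilbertMetric X d) {o' v : EuclideanSpace ℝ (Fin n)} (hv : v ≠ 0) {u w : ℝ}
    (hiff : ∀ r : ℝ, o' + r • v ∈ X ↔ u < r ∧ r < w)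
    (hfu : o' + u • v ∈ frontier X) (hfw : o' + w • v ∈ frontier X)
    {x y : ℝ} (hux : u < x) (hxy : x < y) (hyw : y < w) :
    d (o' + x • v) (o' + y • v) = Real.log (((w - x) * (y - u)) / ((x - u) * (w - y))) := by
  set p := o' + x • v with hp
  set q := o' + y • v with hq
  have hpX : p ∈ X := (hiff x).mpr ⟨hux, by linarith⟩
  have hqX : q ∈ X := (hiff y).mpr ⟨by linarith, hyw⟩
  have hqp : q - p = (y - x) • v := by rw [hp, hq]; module
  have hyx : (0:ℝ) < y - x := by linarith
  have hpq : p ≠ q := by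
    intro h
    have : q - p = 0 := by rw [h]; abel
    rw [hqp] at this
    exact hv (by simpa [hyx.ne'] using smul_eq_zero.mp this)
  set u' := (u - x) / (y - x) with hu'
  set w' := (w - x) / (y - x) with hw'
  have hu'0 : u' < 0 := div_neg_of_neg_of_pos (by linarith) hyx
  have hw'1 : 1 < w' := (one_lt_div hyx).mpr (by linarith)
  have hfu' : p + u' • (q - p) = o' + u • v := by
    rw [hqp, smul_smul, hu', div_mul_cancel₀ _ hyx.ne', hp]
    module
  have hfw' : p + w' • (q - p) = o' + w • v := by
    rw [hqp, smul_smul, hw', div_mul_cancel₀ _ hyx.ne', hp]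
    module
  have key := dist_formula hd hpX hqX hpq hu'0 hw'1 (by rw [hfu']; exact hfu)
    (by rw [hfw']; exact hfw)
  rw [key]
  congr 1
  rw [hu', hw']
  rw [div_eq_div_iff]
  · field_simp
    ring
  · have h1 : (0:ℝ) < -((u - x)/(y - x)) := by linarith
    have h2 : (0:ℝ) < (w - x)/(y - x) - 1 := by linarith
    exact (mul_pos h1 h2).ne'
  · exact (mul_pos (by linarith : (0:ℝ) < x - u) (by linarith : (0:ℝ) < w - y)).ne'

lemma ray_lemma (hconv : Convex ℝ X) (hopen : IsOpen X) (hbdd : Bornology.IsBounded X)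
    {d : EuclideanSpace ℝ (Fin n) → EuclideanSpace ℝ (Fin n) → ℝ}
    (hd : IsHilbertMetric X d) {o : EuclideanSpace ℝ (Fin n)} (ho : o ∈ X)
    {ℓ : ℝ → EuclideanSpace ℝ (Fin n)} (hray : IsHilbertRay X d o ℓ)
    {s t : ℝ} (hs : 0 < s) (hst : s < t) :
    ∃ lam u w : ℝ, 0 < lam ∧ lam < 1 ∧ ℓ s = o + lam • (ℓ t - o) ∧ u < 0 ∧ 1 < w ∧
      (∀ r : ℝ, o + r • (ℓ t - o) ∈ X ↔ u < r ∧ r < w) ∧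
      o + w • (ℓ t - o) ∈ frontier X ∧
      Real.exp t = (w * (1 - u)) / ((-u) * (w - 1)) ∧
      Real.exp s = (w * (lam - u)) / ((-u) * (w - lam)) := by
  obtain ⟨hl0, hlX, hld, v, hv⟩ := hray
  have ht0 : (0:ℝ) < t := lt_trans hs hst
  have haX : ℓ s ∈ X := hlX s hs.le
  have hAX : ℓ t ∈ X := hlX t ht0.le
  have hdot : d o (ℓ t) = t := by
    have h := hld 0 t le_rfl ht0.le
    rw [hl0] at h
    rw [h, abs_of_nonpos (by linarith)]; ring
  have hdos : d o (ℓ s) = s := by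
    have h := hld 0 s le_rfl hs.le
    rw [hl0] at h
    rw [h, abs_of_nonpos (by linarith)]; ring
  have hdso : d (ℓ s) o = s := by
    have h := hld s 0 hs.le le_rfl
    rw [hl0] at h
    rw [h, abs_of_nonneg (by linarith)]; ring
  have hdst : d (ℓ s) (ℓ t) = t - s := by
    rw [hld s t hs.le ht0.le, abs_of_nonpos (by linarith)]; ring
  have hdts : d (ℓ t) (ℓ s) = t - s := by
    rw [hld t s ht0.le hs.le, abs_of_nonneg (by linarith)]
  have hAno : ℓ t ≠ o := by
    intro h
    rw [h, hd.1 o ho] at hdot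
    linarith
  have hano : ℓ s ≠ o := by
    intro h
    rw [h, hd.1 o ho] at hdos
    linarith
  obtain ⟨cs, hcs⟩ := hv s hs.le
  obtain ⟨ct, hct⟩ := hv t ht0.le
  set V := ℓ t - o with hV
  have hVct : V = ct • v := by rw [hV, hct]; abel
  have hV0 : V ≠ 0 := sub_ne_zero.mpr hAno
  have hct0 : ct ≠ 0 := by
    intro h
    rw [h, zero_smul] at hVct
    exact hV0 hVct
  obtain ⟨lam, hlam⟩ : ∃ l : ℝ, l = cs / ct := ⟨_, rfl⟩
  have hlsV : ℓ s = o + lam • V := by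
    rw [hVct, hlam, smul_smul, div_mul_cancel₀ _ hct0, hcs]
  obtain ⟨u, w, hu0, hw0, hiff, hfu, hfw⟩ := chord_exists hconv hopen hbdd ho hV0
  have ho1V : o + (1:ℝ) • V = ℓ t := by rw [one_smul, hV]; abel
  have hoV : o + (1:ℝ) • V ∈ X := by rw [ho1V]; exact hAX
  have hw1 : 1 < w := ((hiff 1).mp hoV).2
  have hu1 : u < 1 := ((hiff 1).mp hoV).1
  have hlam_mem : u < lam ∧ lam < w := (hiff lam).mp (by rw [← hlsV]; exact haX)
  have hlam0 : lam ≠ 0 := by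
    intro h
    apply hano
    rw [hlsV, h, zero_smul, add_zero]
  have ho0V : o + (0:ℝ) • V = o := by rw [zero_smul, add_zero]
  have hEt : Real.exp t = (w * (1 - u)) / ((-u) * (w - 1)) := by
    have h := dist_line hd hV0 hiff hfu hfw hu0 one_pos hw1
    rw [ho0V, ho1V, hdot] at h
    rw [h, Real.exp_log (by
      apply div_pos (mul_pos (by linarith) (by linarith))
        (mul_pos (by linarith) (by linarith)))]
    congr 1 <;> ring
  have hEt' : Real.exp t * ((-u) * (w - 1)) = w * (1 - u) := by
    rw [hEt]
    exact div_mul_cancel₀ _ (mul_pos (by linarith : (0:ℝ) < -u)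
      (by linarith : (0:ℝ) < w - 1)).ne'
  rcases lt_trichotomy lam 0 with hneg | hzero | hpos
  · -- lam < 0 : contradiction
    exfalso
    have hEs : Real.exp s * ((lam - u) * w) = (w - lam) * (-u) := by
      have h := dist_line hd hV0 hiff hfu hfw hlam_mem.1 hneg hw0
      rw [ho0V, ← hlsV, hdso] at h
      rw [show (0:ℝ) - u = -u from by ring, show w - (0:ℝ) = w from by ring] at h
      rw [h, Real.exp_log (by
        apply div_pos (mul_pos (by linarith) (by linarith))
          (mul_pos (by linarith) (by linarith)))]
      exact div_mul_cancel₀ _ (mul_pos (by linarith : (0:ℝ) < lam - u) hw0).ne'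
    have hEts : Real.exp (t - s) * ((lam - u) * (w - 1)) = (w - lam) * (1 - u) := by
      have h := dist_line hd hV0 hiff hfu hfw hlam_mem.1 (by linarith : lam < 1) hw1
      rw [ho1V, ← hlsV, hdst] at h
      rw [h, Real.exp_log (by
        apply div_pos (mul_pos (by linarith) (by linarith))
          (mul_pos (by linarith) (by linarith)))]
      exact div_mul_cancel₀ _ (mul_pos (by linarith : (0:ℝ) < lam - u)
        (by linarith : (0:ℝ) < w - 1)).ne'
    have hest : Real.exp s * Real.exp (t - s) = Real.exp t := by
      rw [← Real.exp_add]; congr 1; ring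
    have h5 : ((-u) * (w - 1)) * (((w - lam) * (-u)) * ((w - lam) * (1 - u)))
        - (w * (1 - u)) * (((lam - u) * w) * ((lam - u) * (w - 1))) = 0 := by
      linear_combination (-(((-u) * (w - 1)) * ((w - lam) * (1 - u)))) * hEs
        + (-(((-u) * (w - 1)) * Real.exp s * ((lam - u) * w))) * hEts
        + (((lam - u) * w) * ((lam - u) * (w - 1)) * ((-u) * (w - 1))) * hest
        + (((lam - u) * w) * ((lam - u) * (w - 1))) * hEt'
    have hfac : ((-u) * (w - lam) - w * (lam - u)) *
        (((-u) * (w - lam) + w * (lam - u)) * ((w - 1) * (1 - u))) = 0 := by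
      linear_combination h5
    have hx : (0:ℝ) < (-u) * (w - lam) := mul_pos (by linarith) (by linarith)
    have hy : (0:ℝ) < w * (lam - u) := mul_pos hw0 (by linarith)
    have hxy : (-u) * (w - lam) = w * (lam - u) := by
      rcases mul_eq_zero.mp hfac with h' | h'
      · linarith
      · exfalso
        have : (0:ℝ) < ((-u) * (w - lam) + w * (lam - u)) * ((w - 1) * (1 - u)) :=
          mul_pos (by linarith) (mul_pos (by linarith) (by linarith))
        linarith
    have hfin : lam * (u - w) = 0 := by linear_combination hxy
    rcases mul_eq_zero.mp hfin with h' | h'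
    · exact hlam0 h'
    · linarith
  · exact absurd hzero hlam0
  · -- lam > 0
    have hEs : Real.exp s = (w * (lam - u)) / ((-u) * (w - lam)) := by
      have h := dist_line hd hV0 hiff hfu hfw hu0 hpos hlam_mem.2
      rw [ho0V, ← hlsV, hdos] at h
      rw [h, Real.exp_log (by
        apply div_pos (mul_pos (by linarith) (by linarith))
          (mul_pos (by linarith) (by linarith)))]
      congr 1 <;> ring
    have hlam1 : lam ≠ 1 := by
      intro h
      have heq : ℓ s = ℓ t := by rw [hlsV, h, one_smul, hV]; abel
      rw [heq, hd.1 _ hAX] at hdst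
      linarith
    rcases lt_or_gt_of_ne hlam1 with hl1 | hl1
    · exact ⟨lam, u, w, hpos, hl1, hlsV, hu0, hw1, hiff, hfw, hEt, hEs⟩
    · -- lam > 1 : contradiction
      exfalso
      have hEs' : Real.exp s * ((-u) * (w - lam)) = w * (lam - u) := by
        rw [hEs]
        exact div_mul_cancel₀ _ (mul_pos (by linarith : (0:ℝ) < -u)
          (by linarith : (0:ℝ) < w - lam)).ne'
      have hEts : Real.exp (t - s) * ((1 - u) * (w - lam)) = (w - 1) * (lam - u) := by
        have h := dist_line hd hV0 hiff hfu hfw hu1 hl1 hlam_mem.2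
        rw [ho1V, ← hlsV, hdts] at h
        rw [h, Real.exp_log (by
          apply div_pos (mul_pos (by linarith) (by linarith))
            (mul_pos (by linarith) (by linarith)))]
        exact div_mul_cancel₀ _ (mul_pos (by linarith : (0:ℝ) < 1 - u)
          (by linarith : (0:ℝ) < w - lam)).ne'
      have hest : Real.exp s * Real.exp (t - s) = Real.exp t := by
        rw [← Real.exp_add]; congr 1; ring
      have h5 : ((-u) * (w - 1)) * ((w * (lam - u)) * ((w - 1) * (lam - u)))
          - (w * (1 - u)) * (((-u) * (w - lam)) * ((1 - u) * (w - lam))) = 0 := by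
        linear_combination (-(((-u) * (w - 1)) * ((w - 1) * (lam - u)))) * hEs'
          + (-(((-u) * (w - 1)) * Real.exp s * ((-u) * (w - lam)))) * hEts
          + (((-u) * (w - lam)) * ((1 - u) * (w - lam)) * ((-u) * (w - 1))) * hest
          + (((-u) * (w - lam)) * ((1 - u) * (w - lam))) * hEt'
      have hfac : ((w - 1) * (lam - u) - (1 - u) * (w - lam)) *
          (((w - 1) * (lam - u) + (1 - u) * (w - lam)) * (w * (-u))) = 0 := by
        linear_combination h5
      have hx : (0:ℝ) < (w - 1) * (lam - u) := mul_pos (by linarith) (by linarith)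
      have hy : (0:ℝ) < (1 - u) * (w - lam) := mul_pos (by linarith) (by linarith)
      have hxy : (w - 1) * (lam - u) = (1 - u) * (w - lam) := by
        rcases mul_eq_zero.mp hfac with h' | h'
        · linarith
        · exfalso
          have : (0:ℝ) < ((w - 1) * (lam - u) + (1 - u) * (w - lam)) * (w * (-u)) :=
            mul_pos (by linarith) (mul_pos hw0 (by linarith))
          linarith
      have hfin : (lam - 1) * (w - u) = 0 := by linear_combination hxy
      rcases mul_eq_zero.mp hfin with h' | h'
      · have : lam = 1 := by linarith
        exact hlam1 this
      · linarith

lemma d_symm (hconv : Convex ℝ X) (hopen : IsOpen X) (hbdd : Bornology.IsBounded X)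
    {d : EuclideanSpace ℝ (Fin n) → EuclideanSpace ℝ (Fin n) → ℝ}
    (hd : IsHilbertMetric X d) {p q : EuclideanSpace ℝ (Fin n)}
    (hp : p ∈ X) (hq : q ∈ X) (hne : p ≠ q) : d p q = d q p := by
  have hv : q - p ≠ 0 := sub_ne_zero.mpr (Ne.symm hne)
  obtain ⟨u, w, hu0, hw0, hiff, hfu, hfw⟩ := chord_exists hconv hopen hbdd hp hv
  have hp0 : p + (0:ℝ) • (q - p) = p := by rw [zero_smul, add_zero]
  have hp1 : p + (1:ℝ) • (q - p) = q := by rw [one_smul]; abel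
  have hq1 : p + (1:ℝ) • (q - p) ∈ X := by rw [hp1]; exact hq
  have hw1 : 1 < w := ((hiff 1).mp hq1).2
  have hu1 : u < 1 := ((hiff 1).mp hq1).1
  have h1 : d p q = Real.log ((w * (1 - u)) / ((-u) * (w - 1))) :=
    dist_formula hd hp hq hne hu0 hw1 hfu hfw
  have hfu' : q + (1 - w) • (p - q) ∈ frontier X := by
    have : q + (1 - w) • (p - q) = p + w • (q - p) := by module
    rw [this]; exact hfw
  have hfw' : q + (1 - u) • (p - q) ∈ frontier X := by
    have : q + (1 - u) • (p - q) = p + u • (q - p) := by module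
    rw [this]; exact hfu
  have h2 : d q p = Real.log (((1 - u) * (1 - (1 - w))) / ((-(1 - w)) * ((1 - u) - 1))) :=
    dist_formula hd hq hp (Ne.symm hne) (by linarith) (by linarith) hfu' hfw'
  rw [h1, h2]
  congr 1
  rw [div_eq_div_iff (mul_pos (by linarith : (0:ℝ) < -u) (by linarith : (0:ℝ) < w-1)).ne'
    (mul_pos (by linarith : (0:ℝ) < -(1-w)) (by linarith : (0:ℝ) < (1-u)-1)).ne']
  ring

set_option maxHeartbeats 2000000 in
lemma main_core (hconv : Convex ℝ X) (hopen : IsOpen X) (hbdd : Bornology.IsBounded X)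
    {d : EuclideanSpace ℝ (Fin n) → EuclideanSpace ℝ (Fin n) → ℝ}
    (hd : IsHilbertMetric X d) {o : EuclideanSpace ℝ (Fin n)} (ho : o ∈ X)
    {A B a b : EuclideanSpace ℝ (Fin n)} {lam mu u₁ w₁ u₂ w₂ : ℝ}
    (hAX : A ∈ X) (hBX : B ∈ X) (hab : a ≠ b) (hAB : A ≠ B)
    (ha : a = o + lam • (A - o)) (hb : b = o + mu • (B - o))
    (hlam : 0 < lam) (hlm : lam ≤ mu) (hmu : mu < 1)
    (hu₁ : u₁ < 0) (hw₁ : 1 < w₁) (hiff₁ : ∀ r : ℝ, o + r • (A - o) ∈ X ↔ u₁ < r ∧ r < w₁)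
    (hfw₁ : o + w₁ • (A - o) ∈ frontier X)
    (hu₂ : u₂ < 0) (hw₂ : 1 < w₂) (hiff₂ : ∀ r : ℝ, o + r • (B - o) ∈ X ↔ u₂ < r ∧ r < w₂)
    (hfw₂ : o + w₂ • (B - o) ∈ frontier X)
    (hC1 : (w₁ * (1 - u₁)) / ((-u₁) * (w₁ - 1)) = (w₂ * (1 - u₂)) / ((-u₂) * (w₂ - 1)))
    (hC2 : (w₁ * (lam - u₁)) / ((-u₁) * (w₁ - lam)) = (w₂ * (mu - u₂)) / ((-u₂) * (w₂ - mu))) :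
    d a b ≤ d A B := by
  have hmu0 : 0 < mu := lt_of_lt_of_le hlam hlm
  have haX : a ∈ X := by rw [ha]; exact (hiff₁ lam).mpr ⟨by linarith, by linarith⟩
  have hbX : b ∈ X := by rw [hb]; exact (hiff₂ mu).mpr ⟨by linarith, by linarith⟩
  have hba : b - a ≠ 0 := sub_ne_zero.mpr (Ne.symm hab)
  have hBA : B - A ≠ 0 := sub_ne_zero.mpr (Ne.symm hAB)
  obtain ⟨u, w, hu0, hw0, hiffL, hfp, hfq⟩ := chord_exists hconv hopen hbdd haX hba
  obtain ⟨u', w', hu'0, hw'0, hiffL', hfp', hfq'⟩ := chord_exists hconv hopen hbdd hAX hBA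
  have hbmem : a + (1:ℝ) • (b - a) = b := by module
  have hw1 : 1 < w := by
    have := (hiffL 1).mp (by rw [hbmem]; exact hbX)
    exact this.2
  have hBmem : A + (1:ℝ) • (B - A) = B := by module
  have hw'1 : 1 < w' := by
    have := (hiffL' 1).mp (by rw [hBmem]; exact hBX)
    exact this.2
  have hdab : d a b = Real.log ((w * (1 - u)) / ((-u) * (w - 1))) :=
    dist_formula hd haX hbX hab hu0 hw1 hfp hfq
  have hdAB : d A B = Real.log ((w' * (1 - u')) / ((-u') * (w' - 1))) :=
    dist_formula hd hAX hBX hAB hu'0 hw'1 hfp' hfq'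
  -- Step 1 : lower endpoint comparison
  have hD₁ : (0:ℝ) < mu - u' * (mu - lam) := by nlinarith
  set r₁ : ℝ := lam * u' / (mu - u' * (mu - lam)) with hr₁
  have hr₁neg : r₁ < 0 := div_neg_of_neg_of_pos (mul_neg_of_pos_of_neg hlam hu'0) hD₁
  set c₁ : ℝ := lam * mu / (mu - u' * (mu - lam)) with hc₁
  have hc₁0 : 0 < c₁ := div_pos (mul_pos hlam hmu0) hD₁
  have hc₁1 : c₁ < 1 := by
    rw [hc₁, div_lt_one hD₁]
    nlinarith
  have hzX : (1 - c₁) • o + c₁ • (A + u' • (B - A)) ∈ X := by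
    have hmem : (1 - c₁) • o + c₁ • (A + u' • (B - A)) ∈ openSegment ℝ o (A + u' • (B - A)) :=
      ⟨1 - c₁, c₁, by linarith, hc₁0, by ring, rfl⟩
    have hsub := hconv.openSegment_interior_closure_subset_interior
      (by rw [hopen.interior_eq]; exact ho) (frontier_subset_closure hfp') hmem
    rw [hopen.interior_eq] at hsub
    exact hsub
  have hzr : (1 - c₁) • o + c₁ • (A + u' • (B - A)) = a + r₁ • (b - a) := by
    rw [ha, hb, hr₁, hc₁]
    match_scalars <;> field_simp <;> ring
  have hE1 : u < r₁ := by
    rw [hzr] at hzX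
    exact ((hiffL r₁).mp hzX).1
  -- Step 3 : delta ≤ 1
  have hdelta0 : (0:ℝ) < lam + w * (mu - lam) := by nlinarith
  have hdelta : lam + w * (mu - lam) ≤ 1 := by
    rcases eq_or_lt_of_le hlm with heq | hlt
    · rw [← heq]
      simp only [sub_self, mul_zero, add_zero]
      linarith
    · by_contra hcon
      push_neg at hcon
      set rm : ℝ := (1 - lam) / (mu - lam) with hrm
      have hml : (0:ℝ) < mu - lam := by linarith
      have hrm1 : 1 < rm := (one_lt_div hml).mpr (by linarith)
      have hrmw : rm < w := by
        rw [hrm, div_lt_iff₀ hml]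
        nlinarith
      have hmX : a + rm • (b - a) ∈ X := (hiffL rm).mpr ⟨by linarith, hrmw⟩
      -- cross-multiplied constraints
      have hden₁ : ((-u₁) * (w₁ - 1)) ≠ 0 :=
        (mul_pos (by linarith : (0:ℝ) < -u₁) (by linarith : (0:ℝ) < w₁ - 1)).ne'
      have hden₂ : ((-u₂) * (w₂ - 1)) ≠ 0 :=
        (mul_pos (by linarith : (0:ℝ) < -u₂) (by linarith : (0:ℝ) < w₂ - 1)).ne'
      have hden₃ : ((-u₁) * (w₁ - lam)) ≠ 0 :=
        (mul_pos (by linarith : (0:ℝ) < -u₁) (by linarith : (0:ℝ) < w₁ - lam)).ne'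
      have hden₄ : ((-u₂) * (w₂ - mu)) ≠ 0 :=
        (mul_pos (by linarith : (0:ℝ) < -u₂) (by linarith : (0:ℝ) < w₂ - mu)).ne'
      have hC1' := (div_eq_div_iff hden₁ hden₂).mp hC1
      have hC2' := (div_eq_div_iff hden₃ hden₄).mp hC2
      have hM₁ : (0:ℝ) < (lam - u₁) * w₁ * (-u₂) + (-u₁) * w₂ * (w₁ - lam) := by
        have := mul_pos (mul_pos (by linarith : (0:ℝ) < lam - u₁) (by linarith : (0:ℝ) < w₁))
          (by linarith : (0:ℝ) < -u₂)
        have := mul_pos (mul_pos (by linarith : (0:ℝ) < -u₁) (by linarith : (0:ℝ) < w₂))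
          (by linarith : (0:ℝ) < w₁ - lam)
        linarith
      have hGM : (w₂ * (w₁ * (mu - lam) + lam * (1 - mu)) - w₁ * mu * (1 - lam)) *
          ((lam - u₁) * w₁ * (-u₂) + (-u₁) * w₂ * (w₁ - lam)) = 0 := by
        linear_combination (-(w₂ * (w₁ - lam) - w₁ * (1 - lam))) * hC2'
          + (w₂ * lam * (w₁ - lam)) * hC1'
      have hG : w₂ * (w₁ * (mu - lam) + lam * (1 - mu)) - w₁ * mu * (1 - lam) = 0 := by
        rcases mul_eq_zero.mp hGM with h' | h'
        · exact h'
        · exact absurd h' hM₁.ne'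
      -- betweenness : Q₂ ∈ openSegment m Q₁
      set th : ℝ := lam * (rm - 1) / (w₁ + lam * (rm - 1)) with hth
      have hthden : (0:ℝ) < w₁ + lam * (rm - 1) := by nlinarith
      have hth0 : 0 < th := div_pos (mul_pos hlam (by linarith)) hthden
      have hth1 : th < 1 := by
        rw [hth, div_lt_one hthden]
        linarith
      have hDne : w₁ * (mu - lam) + lam * (1 - mu) ≠ 0 := by
        have : (0:ℝ) < w₁ * (mu - lam) + lam * (1 - mu) := by
          have h1 : (0:ℝ) < w₁ * (mu - lam) := mul_pos (by linarith) hml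
          have h2 : (0:ℝ) < lam * (1 - mu) := mul_pos hlam (by linarith)
          linarith
        exact this.ne'
      have hx1 : (1 - th) * (lam * (1 - rm)) + th * w₁ = 0 := by
        rw [hth]
        field_simp
        ring
      have hx2 : (1 - th) * (mu * rm) = w₂ := by
        rw [hth, hrm]
        field_simp
        have hD2 : (mu - lam) * w₁ + lam * (1 - lam - (mu - lam)) ≠ 0 := by
          intro h; apply hDne; linarith
        rw [one_sub_div hD2, mul_div_assoc', div_eq_iff hD2]
        linear_combination (lam - mu) * hG
      have hvec : (1 - th) • ((o + lam • (A - o)) + rm • ((o + mu • (B - o)) - (o + lam • (A - o))))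
          + th • (o + w₁ • (A - o))
          = o + ((1 - th) * (lam * (1 - rm)) + th * w₁) • (A - o)
            + ((1 - th) * (mu * rm)) • (B - o) := by
        module
      have hseg : o + w₂ • (B - o) = (1 - th) • (a + rm • (b - a)) + th • (o + w₁ • (A - o)) := by
        rw [ha, hb, hvec, hx1, hx2, zero_smul, add_zero]
      have hQ₂mem : o + w₂ • (B - o) ∈ openSegment ℝ (a + rm • (b - a)) (o + w₁ • (A - o)) :=
        ⟨1 - th, th, by linarith, hth0, by ring, hseg.symm⟩
      have hsub := hconv.openSegment_interior_closure_subset_interior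
        (by rw [hopen.interior_eq]; exact hmX) (frontier_subset_closure hfw₁) hQ₂mem
      rw [hopen.interior_eq] at hsub
      exact (hopen.frontier_eq ▸ hfw₂).2 hsub
  -- Step 2 : upper endpoint comparison
  set r₂ : ℝ := mu * w / (lam + w * (mu - lam)) with hr₂
  have hr₂1 : 1 < r₂ := by
    rw [hr₂, lt_div_iff₀ hdelta0]
    nlinarith
  have hqpi : a + w • (b - a) = (1 - (lam + w * (mu - lam))) • o
      + (lam + w * (mu - lam)) • (A + r₂ • (B - A)) := by
    rw [ha, hb, hr₂]
    match_scalars <;> field_simp <;> ring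
  have hπX : A + r₂ • (B - A) ∉ X := by
    intro hπ
    rcases eq_or_lt_of_le hdelta with heq | hlt
    · have : a + w • (b - a) = A + r₂ • (B - A) := by
        rw [hqpi, heq]
        module
      exact ((hopen.frontier_eq ▸ hfq).2) (by rw [this]; exact hπ)
    · have hqX : a + w • (b - a) ∈ X := by
        rw [hqpi]
        exact hconv ho hπ (by linarith) (by linarith) (by ring)
      exact ((hopen.frontier_eq ▸ hfq).2) hqX
  have hE2 : w' ≤ r₂ := by
    by_contra hcon
    push_neg at hcon
    exact hπX ((hiffL' r₂).mpr ⟨by linarith, hcon⟩)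
  -- Step 4 : assemble
  rw [hdab, hdAB]
  have harg1 : (0:ℝ) < (w * (1 - u)) / ((-u) * (w - 1)) :=
    div_pos (mul_pos hw0 (by linarith)) (mul_pos (by linarith) (by linarith))
  have harg2 : (0:ℝ) < (w' * (1 - u')) / ((-u') * (w' - 1)) :=
    div_pos (mul_pos hw'0 (by linarith)) (mul_pos (by linarith) (by linarith))
  rw [Real.log_le_log_iff harg1 harg2]
  have hchain1 : (w * (1 - u)) / ((-u) * (w - 1)) ≤ (w * (1 - r₁)) / ((-r₁) * (w - 1)) := by
    rw [div_le_div_iff₀ (mul_pos (by linarith : (0:ℝ) < -u) (by linarith : (0:ℝ) < w - 1))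
      (mul_pos (by linarith : (0:ℝ) < -r₁) (by linarith : (0:ℝ) < w - 1))]
    nlinarith [mul_pos hw0 (by linarith : (0:ℝ) < w - 1)]
  have hmid : (w * (1 - r₁)) / ((-r₁) * (w - 1)) = (r₂ * (1 - u')) / ((-u') * (r₂ - 1)) := by
    rw [hr₁, hr₂]
    rw [div_eq_div_iff]
    · field_simp [hD₁.ne', hdelta0.ne']
      ring
    · have h1 : (0:ℝ) < -(lam * u' / (mu - u' * (mu - lam))) := by
        rw [hr₁] at hr₁neg; linarith
      have h2 : (0:ℝ) < w - 1 := by linarith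
      exact (mul_pos h1 h2).ne'
    · have h1 : (0:ℝ) < mu * w / (lam + w * (mu - lam)) - 1 := by
        rw [hr₂] at hr₂1; linarith
      exact (mul_pos (by linarith : (0:ℝ) < -u') h1).ne'
  have hchain2 : (r₂ * (1 - u')) / ((-u') * (r₂ - 1)) ≤ (w' * (1 - u')) / ((-u') * (w' - 1)) := by
    rw [div_le_div_iff₀ (mul_pos (by linarith : (0:ℝ) < -u') (by linarith : (0:ℝ) < r₂ - 1))
      (mul_pos (by linarith : (0:ℝ) < -u') (by linarith : (0:ℝ) < w' - 1))]
    nlinarith [mul_nonneg (mul_nonneg (by linarith : (0:ℝ) ≤ -u') (by linarith : (0:ℝ) ≤ 1 - u'))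
      (by linarith : (0:ℝ) ≤ r₂ - w')]
  calc (w * (1 - u)) / ((-u) * (w - 1)) ≤ (w * (1 - r₁)) / ((-r₁) * (w - 1)) := hchain1
    _ = (r₂ * (1 - u')) / ((-u') * (r₂ - 1)) := hmid
    _ ≤ (w' * (1 - u')) / ((-u') * (w' - 1)) := hchain2

theorem hilbert_rays_distance_monotone
    {n : ℕ} (hn : 2 ≤ n) (X : Set (EuclideanSpace ℝ (Fin n)))
    (hne : X.Nonempty) (hconv : Convex ℝ X) (hopen : IsOpen X)
    (hbdd : Bornology.IsBounded X)
    (d : EuclideanSpace ℝ (Fin n) → EuclideanSpace ℝ (Fin n) → ℝ)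
    (hd : IsHilbertMetric X d)
    (o : EuclideanSpace ℝ (Fin n)) (ho : o ∈ X)
    (ℓ₁ ℓ₂ : ℝ → EuclideanSpace ℝ (Fin n))
    (h₁ : IsHilbertRay X d o ℓ₁) (h₂ : IsHilbertRay X d o ℓ₂)
    (hdist : ∃ t : ℝ, 0 ≤ t ∧ ℓ₁ t ≠ ℓ₂ t)
    (s t : ℝ) (hs : 0 < s) (hst : s < t) :
    d (ℓ₁ s) (ℓ₂ s) ≤ d (ℓ₁ t) (ℓ₂ t) := by
  obtain ⟨lam, u₁, w₁, hlam0, hlam1, hls₁, hu₁, hw₁, hiff₁, hfw₁, hEt₁, hEs₁⟩ :=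
    ray_lemma hconv hopen hbdd hd ho h₁ hs hst
  obtain ⟨mu, u₂, w₂, hmu0, hmu1, hls₂, hu₂, hw₂, hiff₂, hfw₂, hEt₂, hEs₂⟩ :=
    ray_lemma hconv hopen hbdd hd ho h₂ hs hst
  have ht0 : (0:ℝ) < t := hs.trans hst
  have hAX : ℓ₁ t ∈ X := h₁.2.1 t ht0.le
  have hBX : ℓ₂ t ∈ X := h₂.2.1 t ht0.le
  have haX : ℓ₁ s ∈ X := h₁.2.1 s hs.le
  have hbX : ℓ₂ s ∈ X := h₂.2.1 s hs.le
  by_cases hab : ℓ₁ s = ℓ₂ s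
  · rw [hab, hd.1 _ hbX]
    by_cases hAB : ℓ₁ t = ℓ₂ t
    · rw [hAB, hd.1 _ hBX]
    · obtain ⟨u', w', hu'0, hw'0, hiff', hfp', hfq'⟩ :=
        chord_exists hconv hopen hbdd hAX (sub_ne_zero.mpr (Ne.symm hAB))
      have hw'1 : 1 < w' := by
        have hB1 : ℓ₁ t + (1:ℝ) • (ℓ₂ t - ℓ₁ t) = ℓ₂ t := by module
        exact ((hiff' 1).mp (by rw [hB1]; exact hBX)).2
      rw [dist_formula hd hAX hBX hAB hu'0 hw'1 hfp' hfq']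
      apply Real.log_nonneg
      rw [le_div_iff₀ (mul_pos (by linarith : (0:ℝ) < -u') (by linarith : (0:ℝ) < w' - 1))]
      nlinarith
  · have hABne : ℓ₁ t ≠ ℓ₂ t := by
      intro hABeq
      have hiffe : ∀ r : ℝ, (u₁ < r ∧ r < w₁) ↔ (u₂ < r ∧ r < w₂) := by
        intro r
        rw [← hiff₁ r, hABeq, hiff₂ r]
      have hue : u₁ = u₂ := by
        by_contra hne'
        rcases lt_or_gt_of_ne hne' with h' | h'
        · have := ((hiffe ((u₁ + u₂)/2)).mp ⟨by linarith, by linarith⟩).1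
          linarith
        · have := ((hiffe ((u₁ + u₂)/2)).mpr ⟨by linarith, by linarith⟩).1
          linarith
      have hwe : w₁ = w₂ := by
        by_contra hne'
        rcases lt_or_gt_of_ne hne' with h' | h'
        · have := ((hiffe ((w₁ + w₂)/2)).mpr ⟨by linarith, by linarith⟩).2
          linarith
        · have := ((hiffe ((w₁ + w₂)/2)).mp ⟨by linarith, by linarith⟩).2
          linarith
      have hsame : (w₁ * (lam - u₁)) / ((-u₁) * (w₁ - lam))
          = (w₁ * (mu - u₁)) / ((-u₁) * (w₁ - mu)) := by
        rw [← hEs₁, hEs₂, hue, hwe]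
      have hcross := (div_eq_div_iff
        (mul_pos (by linarith : (0:ℝ) < -u₁) (by linarith : (0:ℝ) < w₁ - lam)).ne'
        (mul_pos (by linarith : (0:ℝ) < -u₁) (by linarith : (0:ℝ) < w₁ - mu)).ne').mp hsame
      have hfin : (lam - mu) * ((w₁ - u₁) * (w₁ * (-u₁))) = 0 := by
        linear_combination hcross
      have hlmeq : lam = mu := by
        rcases mul_eq_zero.mp hfin with h' | h'
        · linarith
        · exfalso
          have : (0:ℝ) < (w₁ - u₁) * (w₁ * (-u₁)) :=
            mul_pos (by linarith) (mul_pos (by linarith) (by linarith))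
          linarith
      apply hab
      rw [hls₁, hls₂, hABeq, hlmeq]
    have hC1 : (w₁ * (1 - u₁)) / ((-u₁) * (w₁ - 1)) = (w₂ * (1 - u₂)) / ((-u₂) * (w₂ - 1)) := by
      rw [← hEt₁, ← hEt₂]
    have hls₁' : ℓ₁ s = o + lam • (ℓ₁ t - o) := hls₁
    have hls₂' : ℓ₂ s = o + mu • (ℓ₂ t - o) := hls₂
    rcases le_total lam mu with hlm | hlm
    · have hC2 : (w₁ * (lam - u₁)) / ((-u₁) * (w₁ - lam))
          = (w₂ * (mu - u₂)) / ((-u₂) * (w₂ - mu)) := by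
        rw [← hEs₁, ← hEs₂]
      exact main_core hconv hopen hbdd hd ho hAX hBX hab hABne hls₁' hls₂'
        hlam0 hlm hmu1 hu₁ hw₁ hiff₁ hfw₁ hu₂ hw₂ hiff₂ hfw₂ hC1 hC2
    · have hC2 : (w₂ * (mu - u₂)) / ((-u₂) * (w₂ - mu))
          = (w₁ * (lam - u₁)) / ((-u₁) * (w₁ - lam)) := by
        rw [← hEs₁, ← hEs₂]
      rw [d_symm hconv hopen hbdd hd haX hbX hab,
        d_symm hconv hopen hbdd hd hAX hBX hABne]
      exact main_core hconv hopen hbdd hd ho hBX hAX (Ne.symm hab) (Ne.symm hABne) hls₂' hls₁'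
        hmu0 hlm hlam1 hu₂ hw₂ hiff₂ hfw₂ hu₁ hw₁ hiff₁ hfw₁ hC1.symm hC2
end

section
/- Let (X,d) be a Hilbert geometry with base point o. Let x, y ∈ X with d(x,y) ≤ r and d(o,x) ≤ d(o,y), and let ℓ_x, ℓ_y be rays from o passing through x and y respectively. Then for every s ≤ d(o,y), d(ℓ_x(s), ℓ_y(s)) ≤ 2r. -/
open Real

section aux
variable {n : ℕ} {X : Set (EuclideanSpace ℝ (Fin n))}
  {d : EuclideanSpace ℝ (Fin n) → EuclideanSpace ℝ (Fin n) → ℝ}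


lemma exists_frontier_ray (hopen : IsOpen X) (hbdd : Bornology.IsBounded X)
    {u w : EuclideanSpace ℝ (Fin n)} (hu : u ∈ X) (hw : w ≠ 0) :
    ∃ ρ : ℝ, 0 < ρ ∧ u + ρ • w ∈ frontier X := by
  have hwn : (0:ℝ) < ‖w‖ := norm_pos_iff.2 hw
  set A : Set ℝ := {c : ℝ | 0 ≤ c ∧ u + c • w ∈ X} with hA
  have h0A : (0:ℝ) ∈ A := by simp [hA, hu]
  have hAne : A.Nonempty := ⟨0, h0A⟩
  obtain ⟨R, hR⟩ := hbdd.subset_closedBall 0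
  have hbddA : BddAbove A := by
    refine ⟨(R + ‖u‖)/‖w‖, fun c hc => ?_⟩
    obtain ⟨hc0, hcX⟩ := hc
    have h1 : ‖u + c • w‖ ≤ R := by
      have := hR hcX; simpa [Metric.mem_closedBall, dist_eq_norm] using this
    have h2 : c * ‖w‖ = ‖c • w‖ := by
      rw [norm_smul, Real.norm_eq_abs, abs_of_nonneg hc0]
    have h3 : ‖c • w‖ ≤ ‖u + c • w‖ + ‖u‖ := by
      have := norm_sub_le (u + c • w) u
      simpa using this
    rw [le_div_iff₀ hwn]
    nlinarith
  set ρ := sSup A with hρ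
  have hballs : ∀ c : ℝ, ∀ ε : ℝ, 0 < ε → Metric.ball (u + c • w) ε ⊆ X →
      c + ε / (2 * ‖w‖) ∈ A ∨ ¬ (0 ≤ c) := by
    intro c ε hε hball
    by_cases hc0 : 0 ≤ c
    · left
      refine ⟨by positivity, hball ?_⟩
      simp only [Metric.mem_ball, dist_eq_norm]
      have : u + (c + ε / (2 * ‖w‖)) • w - (u + c • w) = (ε / (2 * ‖w‖)) • w := by
        module
      rw [this, norm_smul, Real.norm_eq_abs, abs_of_pos (by positivity)]
      rw [div_mul_eq_mul_div, mul_comm]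
      rw [div_lt_iff₀ (by positivity)]
      nlinarith
    · right; exact hc0
  have hρpos : 0 < ρ := by
    obtain ⟨ε, hε, hball⟩ := Metric.isOpen_iff.1 hopen u hu
    have h := hballs 0 ε hε (by simpa using hball)
    rcases h with h | h
    · calc (0:ℝ) < 0 + ε / (2 * ‖w‖) := by positivity
        _ ≤ ρ := le_csSup hbddA h
    · exact absurd le_rfl h
  have hclos : u + ρ • w ∈ closure X := by
    rw [Metric.mem_closure_iff]
    intro ε hε
    obtain ⟨a, haA, ha⟩ := exists_lt_of_lt_csSup hAne
      (show ρ - ε / (2 * ‖w‖) < ρ by nlinarith [div_pos hε (by positivity : (0:ℝ) < 2 * ‖w‖)])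
    refine ⟨u + a • w, haA.2, ?_⟩
    have hale : a ≤ ρ := le_csSup hbddA haA
    have : u + ρ • w - (u + a • w) = (ρ - a) • w := by module
    rw [dist_eq_norm, this, norm_smul, Real.norm_eq_abs, abs_of_nonneg (by linarith)]
    have h1 : ρ - a < ε / (2 * ‖w‖) := by linarith
    calc (ρ - a) * ‖w‖ < (ε / (2 * ‖w‖)) * ‖w‖ := by
          apply mul_lt_mul_of_pos_right h1 hwn
      _ = ε / 2 := by field_simp
      _ < ε := by linarith
  have hnot : u + ρ • w ∉ X := by
    intro hmem
    obtain ⟨ε, hε, hball⟩ := Metric.isOpen_iff.1 hopen _ hmem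
    have h := hballs ρ ε hε hball
    rcases h with h | h
    · have := le_csSup hbddA h
      have : 0 < ε / (2*‖w‖) := by positivity
      linarith [le_csSup hbddA h]
    · exact h hρpos.le
  exact ⟨ρ, hρpos, by rw [hopen.frontier_eq]; exact ⟨hclos, hnot⟩⟩

lemma frontier_scalar_le (hconv : Convex ℝ X) (hopen : IsOpen X)
    {u w : EuclideanSpace ℝ (Fin n)} (hu : u ∈ X) {c c' : ℝ}
    (hf : u + c • w ∈ frontier X) (hc : 0 < c)
    (hz : u + c' • w ∈ closure X) : c' ≤ c := by
  by_contra hlt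
  push_neg at hlt
  have hc' : 0 < c' := lt_trans hc hlt
  have hmem : u + c • w ∈ openSegment ℝ u (u + c' • w) := by
    refine ⟨1 - c/c', c/c', by
      have : c/c' < 1 := (div_lt_one hc').2 hlt
      linarith, by positivity, by ring, ?_⟩
    match_scalars <;> field_simp <;> ring
  have hX : u + c • w ∈ X := by
    have := hconv.openSegment_interior_closure_subset_interior
      (by rwa [hopen.interior_eq]) hz hmem
    rwa [hopen.interior_eq] at this
  rw [hopen.frontier_eq] at hf
  exact hf.2 hX



/-- Forward certificate: `v = u + (1-σ)•(z-u)` for some `z` in `closure X`. -/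
def CertF (X : Set (EuclideanSpace ℝ (Fin n))) (u v : EuclideanSpace ℝ (Fin n)) (σ : ℝ) : Prop :=
  ∃ z ∈ closure X, v - u = (1 - σ) • (z - u)

/-- Reverse certificate: `σ•(v-u) = (1-σ)•(u-z)` for some `z` in `closure X`. -/
def CertR (X : Set (EuclideanSpace ℝ (Fin n))) (u v : EuclideanSpace ℝ (Fin n)) (σ : ℝ) : Prop :=
  ∃ z ∈ closure X, σ • (v - u) = (1 - σ) • (u - z)

lemma CertF.comp (hconv : Convex ℝ X) {u v w : EuclideanSpace ℝ (Fin n)} {σ₁ σ₂ : ℝ}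
    (h1 : CertF X u v σ₁) (h2 : CertF X v w σ₂)
    (hσ1 : 0 < σ₁) (hσ1' : σ₁ ≤ 1) (hσ2 : 0 < σ₂) (hσ2' : σ₂ ≤ 1) :
    CertF X u w (σ₁ * σ₂) := by
  obtain ⟨z1, hz1, e1⟩ := h1
  obtain ⟨z2, hz2, e2⟩ := h2
  by_cases hone : σ₁ * σ₂ = 1
  · have hs1 : σ₁ = 1 := by nlinarith
    have hs2 : σ₂ = 1 := by nlinarith
    refine ⟨z1, hz1, ?_⟩
    have hv : v - u = 0 := by rw [hs1] at e1; simp only [sub_self, zero_smul] at e1; exact e1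
    have hw2 : w - v = 0 := by rw [hs2] at e2; simp only [sub_self, zero_smul] at e2; exact e2
    have hwu : w - u = 0 := by
      rw [show w - u = (w - v) + (v - u) from by module, hv, hw2]; simp
    rw [hone, hwu]; simp
  · have hlt : σ₁ * σ₂ < 1 := lt_of_le_of_ne (by nlinarith) hone
    have hpos : 0 < 1 - σ₁ * σ₂ := by linarith
    have hab : (1 - σ₁) * σ₂ / (1 - σ₁ * σ₂) + (1 - σ₂) / (1 - σ₁ * σ₂) = 1 := by
      field_simp; ring
    have haz : 0 ≤ (1 - σ₁) * σ₂ / (1 - σ₁ * σ₂) := by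
      apply div_nonneg _ hpos.le; nlinarith
    have hbz : 0 ≤ (1 - σ₂) / (1 - σ₁ * σ₂) := div_nonneg (by linarith) hpos.le
    refine ⟨((1 - σ₁) * σ₂ / (1 - σ₁ * σ₂)) • z1 + ((1 - σ₂) / (1 - σ₁ * σ₂)) • z2,
      (hconv.closure) hz1 hz2 haz hbz hab, ?_⟩
    have key : w - u = ((1 - σ₁) * σ₂) • (z1 - u) + (1 - σ₂) • (z2 - u) := by
      have : w - u = (w - v) + (v - u) := by module
      rw [this, e1, e2]
      linear_combination (norm := module) (σ₂ - 1 : ℝ) • e1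
    have hne' : (1 - σ₁ * σ₂) ≠ 0 := ne_of_gt hpos
    have hne'' : (1 - σ₂ * σ₁) ≠ 0 := by rw [mul_comm]; exact hne'
    rw [key]
    match_scalars <;> field_simp [hne', hne''] <;> ring

lemma CertR.comp (hconv : Convex ℝ X) {u v w : EuclideanSpace ℝ (Fin n)} {σ₁ σ₂ : ℝ}
    (h1 : CertR X u v σ₁) (h2 : CertR X v w σ₂)
    (hσ1 : 0 < σ₁) (hσ1' : σ₁ ≤ 1) (hσ2 : 0 < σ₂) (hσ2' : σ₂ ≤ 1) :
    CertR X u w (σ₁ * σ₂) := by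
  obtain ⟨z1, hz1, e1⟩ := h1
  obtain ⟨z2, hz2, e2⟩ := h2
  by_cases hone : σ₁ * σ₂ = 1
  · have hs1 : σ₁ = 1 := by nlinarith
    have hs2 : σ₂ = 1 := by nlinarith
    refine ⟨z1, hz1, ?_⟩
    have hv : v - u = 0 := by
      rw [hs1] at e1; simp only [sub_self, zero_smul, one_smul] at e1; exact e1
    have hw2 : w - v = 0 := by
      rw [hs2] at e2; simp only [sub_self, zero_smul, one_smul] at e2; exact e2
    have hwu : w - u = 0 := by
      rw [show w - u = (w - v) + (v - u) from by module, hv, hw2]; simp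
    rw [hone, hwu]; simp
  · have hlt : σ₁ * σ₂ < 1 := lt_of_le_of_ne (by nlinarith) hone
    have hpos : 0 < 1 - σ₁ * σ₂ := by linarith
    have hne' : (1 - σ₁ * σ₂) ≠ 0 := ne_of_gt hpos
    have hab : (1 - σ₁) / (1 - σ₁ * σ₂) + σ₁ * (1 - σ₂) / (1 - σ₁ * σ₂) = 1 := by
      field_simp; ring
    have haz : 0 ≤ (1 - σ₁) / (1 - σ₁ * σ₂) := div_nonneg (by linarith) hpos.le
    have hbz : 0 ≤ σ₁ * (1 - σ₂) / (1 - σ₁ * σ₂) := by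
      apply div_nonneg _ hpos.le; nlinarith
    refine ⟨((1 - σ₁) / (1 - σ₁ * σ₂)) • z1 + (σ₁ * (1 - σ₂) / (1 - σ₁ * σ₂)) • z2,
      (hconv.closure) hz1 hz2 haz hbz hab, ?_⟩
    -- (σ₁σ₂)(w-u) = (1-σ₁)(u-z1) + σ₁(1-σ₂)(u-z2)
    have key : (σ₁ * σ₂) • (w - u) = (1 - σ₁) • (u - z1) + (σ₁ * (1 - σ₂)) • (u - z2) := by
      have expand : (σ₁ * σ₂) • (w - u) = σ₁ • (σ₂ • (w - v)) + σ₂ • (σ₁ • (v - u)) := by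
        module
      rw [expand, e2, e1]
      linear_combination (norm := module) ((1 - σ₂) : ℝ) • e1
    rw [key]
    match_scalars <;> field_simp <;> ring

lemma CertR.flip {u v : EuclideanSpace ℝ (Fin n)} {σ : ℝ} (h : CertR X u v σ) :
    CertF X v u σ := by
  obtain ⟨z, hz, e⟩ := h
  exact ⟨z, hz, by linear_combination (norm := module) -e⟩

lemma CertF.flip {u v : EuclideanSpace ℝ (Fin n)} {σ : ℝ} (h : CertF X u v σ) :
    CertR X v u σ := by
  obtain ⟨z, hz, e⟩ := h
  exact ⟨z, hz, by linear_combination (norm := module) -e⟩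

lemma CertF.contract (hconv : Convex ℝ X) {o u v : EuclideanSpace ℝ (Fin n)} (ho : o ∈ X)
    {σ lam : ℝ} (hl0 : 0 ≤ lam) (hl1 : lam ≤ 1) (h : CertF X u v σ) :
    CertF X (o + lam • (u - o)) (o + lam • (v - o)) σ := by
  obtain ⟨z, hz, e⟩ := h
  refine ⟨o + lam • (z - o), ?_, ?_⟩
  · have := (hconv.closure) (subset_closure ho) hz (by linarith : (0:ℝ) ≤ 1 - lam) hl0 (by ring)
    convert this using 1
    module
  · linear_combination (norm := module) (lam : ℝ) • e

lemma CertR.contract (hconv : Convex ℝ X) {o u v : EuclideanSpace ℝ (Fin n)} (ho : o ∈ X)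
    {σ lam : ℝ} (hl0 : 0 ≤ lam) (hl1 : lam ≤ 1) (h : CertR X u v σ) :
    CertR X (o + lam • (u - o)) (o + lam • (v - o)) σ := by
  obtain ⟨z, hz, e⟩ := h
  refine ⟨o + lam • (z - o), ?_, ?_⟩
  · have := (hconv.closure) (subset_closure ho) hz (by linarith : (0:ℝ) ≤ 1 - lam) hl0 (by ring)
    convert this using 1
    module
  · linear_combination (norm := module) (lam : ℝ) • e

lemma hilbert_core (hconv : Convex ℝ X) (hopen : IsOpen X) (hbdd : Bornology.IsBounded X)
    (hd : IsHilbertMetric X d) {u v : EuclideanSpace ℝ (Fin n)}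
    (hu : u ∈ X) (hv : v ∈ X) (huv : u ≠ v) :
    ∃ ρp ρm : ℝ, 1 < ρp ∧ 0 < ρm ∧
      u + ρp • (v - u) ∈ frontier X ∧ u + (-ρm) • (v - u) ∈ frontier X ∧
      d u v = Real.log (ρp * (1 + ρm) / (ρm * (ρp - 1))) := by
  set w := v - u with hwdef
  have hw : w ≠ 0 := sub_ne_zero.2 (Ne.symm huv)
  have hwn : (0:ℝ) < ‖w‖ := norm_pos_iff.2 hw
  obtain ⟨ρp, hρp, hBp⟩ := exists_frontier_ray hopen hbdd hu hw
  obtain ⟨ρm, hρm, hBm'⟩ := exists_frontier_ray hopen hbdd hu (neg_ne_zero.2 hw)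
  have hBm : u + (-ρm) • w ∈ frontier X := by
    have : (-ρm) • w = ρm • (-w) := by module
    rwa [this]
  have hvclos : u + (1:ℝ) • w ∈ closure X := by
    rw [one_smul, hwdef]
    have : u + (v - u) = v := by module
    rw [this]; exact subset_closure hv
  have h1le : 1 ≤ ρp := frontier_scalar_le hconv hopen hu hBp hρp hvclos
  have h1lt : 1 < ρp := by
    rcases lt_or_eq_of_le h1le with h | h
    · exact h
    · exfalso
      rw [← h, one_smul] at hBp
      have : u + w = v := by rw [hwdef]; module
      rw [this, hopen.frontier_eq] at hBp
      exact hBp.2 hv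
  refine ⟨ρp, ρm, h1lt, hρm, hBp, hBm, ?_⟩
  have hveq : v = u + (1:ℝ) • w := by rw [one_smul, hwdef]; module
  have seg1 : u ∈ segment ℝ (u + (-ρm) • w) v := by
    refine ⟨1/(1+ρm), ρm/(1+ρm), by positivity, by positivity, by field_simp, ?_⟩
    rw [hveq]; match_scalars <;> field_simp <;> ring
  have seg2 : v ∈ segment ℝ u (u + ρp • w) := by
    refine ⟨(ρp-1)/ρp, 1/ρp, div_nonneg (by linarith) (by linarith), by positivity,
      by field_simp; ring, ?_⟩
    rw [hveq]; match_scalars <;> (field_simp; try ring)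
  have d1 : dist u (u + ρp • w) = ρp * ‖w‖ := by
    rw [dist_eq_norm, show u - (u + ρp • w) = (-ρp) • w from by module, norm_smul,
      Real.norm_eq_abs, abs_neg, abs_of_pos (by linarith : (0:ℝ) < ρp)]
  have d2 : dist v (u + (-ρm) • w) = (1 + ρm) * ‖w‖ := by
    rw [dist_eq_norm, show v - (u + (-ρm) • w) = (1 + ρm) • w from by

      rw [hwdef]; module, norm_smul,
      Real.norm_eq_abs, abs_of_pos (by linarith : (0:ℝ) < 1 + ρm)]
  have d3 : dist u (u + (-ρm) • w) = ρm * ‖w‖ := by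
    rw [dist_eq_norm, show u - (u + (-ρm) • w) = ρm • w from by module, norm_smul,
      Real.norm_eq_abs, abs_of_pos hρm]
  have d4 : dist v (u + ρp • w) = (ρp - 1) * ‖w‖ := by
    rw [dist_eq_norm, show v - (u + ρp • w) = (1 - ρp) • w from by rw [hwdef]; module, norm_smul,
      Real.norm_eq_abs, abs_of_neg (by linarith : 1 - ρp < 0)]
    ring
  have := hd.2 u hu v hv huv _ hBm _ hBp seg1 seg2
  rw [this, d1, d2, d3, d4]
  congr 1
  have h1 : ‖w‖ ≠ 0 := hwn.ne'
  have h2 : ρm ≠ 0 := hρm.ne'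
  have h3 : ρp - 1 ≠ 0 := by linarith
  field_simp
lemma hilbert_extract (hconv : Convex ℝ X) (hopen : IsOpen X) (hbdd : Bornology.IsBounded X)
    (hd : IsHilbertMetric X d) {u v : EuclideanSpace ℝ (Fin n)}
    (hu : u ∈ X) (hv : v ∈ X) (huv : u ≠ v) :
    ∃ σ₁ σ₂ : ℝ, 0 < σ₁ ∧ σ₁ < 1 ∧ 0 < σ₂ ∧ σ₂ < 1 ∧
      CertF X u v σ₁ ∧ CertR X u v σ₂ ∧ σ₁ * σ₂ = Real.exp (-(d u v)) := by
  obtain ⟨ρp, ρm, h1lt, hρm, hBp, hBm, hform⟩ := hilbert_core hconv hopen hbdd hd hu hv huv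
  have hρp : (0:ℝ) < ρp := by linarith
  have hρpne : ρp ≠ 0 := hρp.ne'
  have hρmne : (1:ℝ) + ρm ≠ 0 := by linarith
  refine ⟨(ρp - 1)/ρp, ρm/(1+ρm), div_pos (by linarith) hρp, ?_, by positivity, ?_, ?_, ?_, ?_⟩
  · rw [div_lt_one hρp]; linarith
  · rw [div_lt_one (by linarith)]; linarith
  · refine ⟨u + ρp • (v - u), frontier_subset_closure hBp, ?_⟩
    match_scalars <;> (field_simp; try ring)
  · refine ⟨u + (-ρm) • (v - u), frontier_subset_closure hBm, ?_⟩
    match_scalars <;> (field_simp; try ring)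
  · rw [hform]
    have hK : (0:ℝ) < ρp * (1 + ρm) / (ρm * (ρp - 1)) := by
      apply div_pos <;> nlinarith
    rw [Real.exp_neg, Real.exp_log hK]
    rw [inv_div]
    field_simp

lemma hilbert_eval (hconv : Convex ℝ X) (hopen : IsOpen X) (hbdd : Bornology.IsBounded X)
    (hd : IsHilbertMetric X d) {u v : EuclideanSpace ℝ (Fin n)}
    (hu : u ∈ X) (hv : v ∈ X) {σ₁ σ₂ : ℝ}
    (hσ1 : 0 < σ₁) (hσ1' : σ₁ ≤ 1) (hσ2 : 0 < σ₂) (hσ2' : σ₂ ≤ 1)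
    (hF : CertF X u v σ₁) (hR : CertR X u v σ₂) :
    d u v ≤ -Real.log (σ₁ * σ₂) := by
  by_cases huv : u = v
  · rw [huv, hd.1 v hv]
    have := Real.log_nonpos (by positivity : (0:ℝ) ≤ σ₁ * σ₂) (by nlinarith : σ₁ * σ₂ ≤ 1)
    linarith
  · obtain ⟨ρp, ρm, h1lt, hρm, hBp, hBm, hform⟩ := hilbert_core hconv hopen hbdd hd hu hv huv
    obtain ⟨z, hz, e⟩ := hF
    obtain ⟨z', hz', e'⟩ := hR
    have hvu : v - u ≠ 0 := sub_ne_zero.2 (Ne.symm huv)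
    have hσ1lt : σ₁ < 1 := by
      rcases lt_or_eq_of_le hσ1' with h | h
      · exact h
      · exfalso; rw [h] at e; simp only [sub_self, zero_smul] at e
        exact hvu e
    have hσ2lt : σ₂ < 1 := by
      rcases lt_or_eq_of_le hσ2' with h | h
      · exact h
      · exfalso; rw [h] at e'; simp only [sub_self, zero_smul, one_smul] at e'
        exact hvu e'
    have hs1ne : (1:ℝ) - σ₁ ≠ 0 := by linarith
    have hs2ne : (1:ℝ) - σ₂ ≠ 0 := by linarith
    have hzeq : u + (1/(1-σ₁)) • (v - u) = z := by
      rw [e]; match_scalars <;> field_simp <;> ring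
    have h2 : u - z' = (1-σ₂)⁻¹ • (σ₂ • (v - u)) := by
      rw [e']
      exact (inv_smul_smul₀ hs2ne _).symm
    have hz'eq : u + (σ₂/(1-σ₂)) • (-(v - u)) = z' := by
      have h3 : z' = u - (1-σ₂)⁻¹ • (σ₂ • (v - u)) := by
        rw [eq_sub_iff_add_eq, ← eq_sub_iff_add_eq']
        exact h2.symm
      rw [h3]
      match_scalars <;> field_simp <;> ring
    have hb1 : 1/(1-σ₁) ≤ ρp := by
      apply frontier_scalar_le hconv hopen hu hBp (by linarith)
      rw [hzeq]; exact hz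
    have hb2 : σ₂/(1-σ₂) ≤ ρm := by
      have hBm2 : u + ρm • (-(v - u)) ∈ frontier X := by
        have : ρm • (-(v-u)) = (-ρm) • (v - u) := by module
        rwa [this]
      apply frontier_scalar_le hconv hopen hu hBm2 hρm
      rw [hz'eq]; exact hz'
    have key1 : ρp * σ₁ ≤ ρp - 1 := by
      have h1 : 1 ≤ ρp * (1 - σ₁) := by
        rw [div_le_iff₀ (by linarith : (0:ℝ) < 1 - σ₁)] at hb1
        linarith [hb1]
      nlinarith
    have key2 : (1 + ρm) * σ₂ ≤ ρm := by
      have h2 : σ₂ ≤ ρm * (1 - σ₂) := by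
        rw [div_le_iff₀ (by linarith : (0:ℝ) < 1 - σ₂)] at hb2
        linarith
      nlinarith
    have hKpos : (0:ℝ) < ρp * (1 + ρm) / (ρm * (ρp - 1)) := by
      apply div_pos <;> nlinarith
    have hprod : (0:ℝ) < σ₁ * σ₂ := by positivity
    have hmain : (ρp*σ₁) * ((1+ρm)*σ₂) ≤ (ρp-1) * ρm :=
      mul_le_mul key1 key2 (by positivity) (by linarith)
    have hle : ρp * (1 + ρm) / (ρm * (ρp - 1)) ≤ (σ₁ * σ₂)⁻¹ := by
      rw [div_le_iff₀ (by nlinarith : (0:ℝ) < ρm * (ρp - 1)),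
        show (σ₁*σ₂)⁻¹ * (ρm*(ρp-1)) = (ρm*(ρp-1))/(σ₁*σ₂) from by ring,
        le_div_iff₀ hprod]
      calc ρp * (1 + ρm) * (σ₁ * σ₂) = (ρp*σ₁) * ((1+ρm)*σ₂) := by ring
        _ ≤ (ρp-1) * ρm := hmain
        _ = ρm * (ρp - 1) := by ring
    calc d u v = Real.log (ρp * (1 + ρm) / (ρm * (ρp - 1))) := hform
      _ ≤ Real.log ((σ₁*σ₂)⁻¹) := Real.log_le_log hKpos hle
      _ = -Real.log (σ₁*σ₂) := Real.log_inv _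

lemma hilbert_nonneg (hconv : Convex ℝ X) (hopen : IsOpen X) (hbdd : Bornology.IsBounded X)
    (hd : IsHilbertMetric X d) {u v : EuclideanSpace ℝ (Fin n)}
    (hu : u ∈ X) (hv : v ∈ X) : 0 ≤ d u v := by
  by_cases huv : u = v
  · rw [huv, hd.1 v hv]
  · obtain ⟨σ₁, σ₂, h1, h2, h3, h4, _, _, hprod⟩ :=
      hilbert_extract hconv hopen hbdd hd hu hv huv
    have hlt : σ₁ * σ₂ < 1 := by nlinarith
    rw [hprod] at hlt
    have := Real.exp_lt_exp.1 (by simpa using hlt : Real.exp (-(d u v)) < Real.exp 0)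
    linarith

lemma hilbert_triangle (hconv : Convex ℝ X) (hopen : IsOpen X) (hbdd : Bornology.IsBounded X)
    (hd : IsHilbertMetric X d) {a b c : EuclideanSpace ℝ (Fin n)}
    (ha : a ∈ X) (hb : b ∈ X) (hc : c ∈ X) : d a c ≤ d a b + d b c := by
  by_cases hab : a = b
  · rw [hab, hd.1 b hb]; simp [hab]
  by_cases hbc : b = c
  · rw [← hbc, hd.1 b hb]; simp [hbc]
  by_cases hac : a = c
  · subst hac
    rw [hd.1 a ha]
    have h1 := hilbert_nonneg hconv hopen hbdd hd ha hb
    have h2 := hilbert_nonneg hconv hopen hbdd hd hb ha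
    linarith
  obtain ⟨σ₁, σ₂, hσ1, hσ1', hσ2, hσ2', hF1, hR1, hprod1⟩ :=
    hilbert_extract hconv hopen hbdd hd ha hb hab
  obtain ⟨τ₁, τ₂, hτ1, hτ1', hτ2, hτ2', hF2, hR2, hprod2⟩ :=
    hilbert_extract hconv hopen hbdd hd hb hc hbc
  have hF := hF1.comp hconv hF2 hσ1 hσ1'.le hτ1 hτ1'.le
  have hR := hR1.comp hconv hR2 hσ2 hσ2'.le hτ2 hτ2'.le
  have heval := hilbert_eval hconv hopen hbdd hd ha hc
    (by positivity) (by nlinarith) (by positivity) (by nlinarith) hF hR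
  have hlogeq : Real.log (σ₁ * τ₁ * (σ₂ * τ₂)) = -(d a b + d b c) := by
    rw [show σ₁ * τ₁ * (σ₂ * τ₂) = (σ₁ * σ₂) * (τ₁ * τ₂) from by ring, hprod1, hprod2,
      ← Real.exp_add, Real.log_exp]
    ring
  rw [hlogeq] at heval
  linarith

lemma ray_points (hconv : Convex ℝ X) (hopen : IsOpen X) (hbdd : Bornology.IsBounded X)
    (hd : IsHilbertMetric X d) {o : EuclideanSpace ℝ (Fin n)} (ho : o ∈ X)
    {ℓ : ℝ → EuclideanSpace ℝ (Fin n)}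
    (h0 : ℓ 0 = o) (hmem : ∀ t : ℝ, 0 ≤ t → ℓ t ∈ X)
    (hdist : ∀ s t : ℝ, 0 ≤ s → 0 ≤ t → d (ℓ s) (ℓ t) = |s - t|)
    (hline : ∃ v : EuclideanSpace ℝ (Fin n), ∀ t : ℝ, 0 ≤ t → ∃ c : ℝ, ℓ t = o + c • v) :
    ∀ t : ℝ, 0 ≤ t →
      (∀ s : ℝ, 0 ≤ s → s ≤ t → ∃ θ : ℝ, 0 ≤ θ ∧ θ ≤ 1 ∧ ℓ s = o + θ • (ℓ t - o)) ∧
      (∀ μ : ℝ, 0 ≤ μ → μ ≤ 1 → ∃ τ : ℝ, 0 ≤ τ ∧ τ ≤ t ∧ ℓ τ = o + μ • (ℓ t - o)) := by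
  obtain ⟨v, hc⟩ := hline
  have hzero : ∀ t : ℝ, 0 ≤ t → ℓ t = o → t = 0 := by
    intro t ht heq
    have := hdist 0 t le_rfl ht
    rw [h0, heq, hd.1 o ho] at this
    have : |0 - t| = 0 := this.symm
    simpa [abs_of_nonneg ht, abs_sub_comm] using this
  intro t ht
  rcases eq_or_lt_of_le ht with hteq | htpos
  · constructor
    · intro s hs hst
      have hs0 : s = 0 := le_antisymm (hteq ▸ hst) hs
      refine ⟨0, le_rfl, zero_le_one, ?_⟩
      rw [hs0, h0]; simp
    · intro μ hμ0 hμ1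
      refine ⟨0, le_rfl, ht, ?_⟩
      rw [h0, ← hteq, h0]; simp
  -- main case 0 < t
  set w := ℓ t - o with hwdef
  have hlt_ne : ℓ t ≠ o := by
    intro h
    have := hzero t ht h
    linarith
  have hw : w ≠ 0 := sub_ne_zero.2 hlt_ne
  have hwn : (0:ℝ) < ‖w‖ := norm_pos_iff.2 hw
  obtain ⟨P, hP, hBp⟩ := exists_frontier_ray hopen hbdd ho hw
  obtain ⟨M, hM, hBm'⟩ := exists_frontier_ray hopen hbdd ho (neg_ne_zero.2 hw)
  have hBm : o + (-M) • w ∈ frontier X := by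
    have : (-M) • w = M • (-w) := by module
    rwa [this]
  -- coordinates
  have coordT : ∀ τ : ℝ, ∃ e : ℝ, 0 ≤ τ → ℓ τ = o + e • w := by
    intro τ
    by_cases hτ : 0 ≤ τ
    · obtain ⟨cτ, hcτ⟩ := hc τ hτ
      obtain ⟨ct, hct⟩ := hc t ht
      have hctne : ct ≠ 0 := by
        intro h
        rw [h] at hct
        simp at hct
        exact hlt_ne hct
      refine ⟨cτ / ct, fun _ => ?_⟩
      rw [hcτ]
      have hwv : w = ct • v := by rw [hwdef, hct]; module
      rw [hwv, smul_smul]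
      congr 2
      field_simp
    · exact ⟨0, fun h => absurd h hτ⟩
  choose ef hef using coordT
  -- membership range
  have range : ∀ e : ℝ, o + e • w ∈ X → -M < e ∧ e < P := by
    intro e he
    constructor
    · have hcl : o + (-e) • (-w) ∈ closure X := by
        have : o + (-e) • (-w) = o + e • w := by module
        rw [this]; exact subset_closure he
      have hle := frontier_scalar_le hconv hopen ho
        (by  -- frontier point o + M • (-w)
          have : o + M • (-w) = o + (-M) • w := by module
          rw [this]; exact hBm) hM hcl
      rcases lt_or_eq_of_le hle with h | h
      · linarith
      · exfalso
        have : o + (-M) • w ∈ X := by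
          have he' : o + (-e) • (-w) = o + e • w := by module
          have h2 : (-M : ℝ) = e := by linarith [h]
          rw [h2]; exact he
        rw [hopen.frontier_eq] at hBm
        exact hBm.2 this
    · have hcl : o + e • w ∈ closure X := subset_closure he
      have hle := frontier_scalar_le hconv hopen ho hBp hP hcl
      rcases lt_or_eq_of_le hle with h | h
      · exact h
      · exfalso
        have : o + P • w ∈ X := by rw [← h]; exact he
        rw [hopen.frontier_eq] at hBp
        exact hBp.2 this
  -- chord distance formula
  have chord : ∀ e₁ e₂ : ℝ, -M < e₁ → e₁ < e₂ → e₂ < P →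
      o + e₁ • w ∈ X → o + e₂ • w ∈ X →
      d (o + e₁ • w) (o + e₂ • w) =
        (Real.log (e₂ + M) - Real.log (P - e₂)) - (Real.log (e₁ + M) - Real.log (P - e₁)) := by
    intro e₁ e₂ hm1 h12 h2P h1X h2X
    have hm2 : -M < e₂ := lt_trans hm1 h12
    have h1P : e₁ < P := lt_trans h12 h2P
    have hpe1 : (0:ℝ) < e₁ + M := by linarith
    have hpe2 : (0:ℝ) < e₂ + M := by linarith
    have hP1 : (0:ℝ) < P - e₁ := by linarith
    have hP2 : (0:ℝ) < P - e₂ := by linarith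
    have hne : o + e₁ • w ≠ o + e₂ • w := by
      intro h
      have : (e₁ - e₂) • w = 0 := by
        have := sub_eq_zero.2 h
        rw [show o + e₁ • w - (o + e₂ • w) = (e₁ - e₂) • w from by module] at this
        exact this
      rcases smul_eq_zero.1 this with h' | h'
      · have : e₁ = e₂ := by linarith [sub_eq_zero.1 (by linarith [h'] : e₁ - e₂ = (0:ℝ))]
        linarith
      · exact hw h'
    have seg1 : o + e₁ • w ∈ segment ℝ (o + (-M) • w) (o + e₂ • w) := by
      refine ⟨(e₂ - e₁)/(e₂ + M), (e₁ + M)/(e₂ + M),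
        div_nonneg (by linarith) hpe2.le, div_nonneg (by linarith) hpe2.le,
        by (field_simp; try ring), ?_⟩
      match_scalars <;> (field_simp; try ring)
    have seg2 : o + e₂ • w ∈ segment ℝ (o + e₁ • w) (o + P • w) := by
      refine ⟨(P - e₂)/(P - e₁), (e₂ - e₁)/(P - e₁),
        div_nonneg (by linarith) hP1.le, div_nonneg (by linarith) hP1.le,
        by (field_simp; try ring), ?_⟩
      match_scalars <;> (field_simp; try ring)
    have d1 : dist (o + e₁ • w) (o + P • w) = (P - e₁) * ‖w‖ := by
      rw [dist_eq_norm, show o + e₁ • w - (o + P • w) = (e₁ - P) • w from by module,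
        norm_smul, Real.norm_eq_abs, abs_of_neg (by linarith : e₁ - P < 0)]
      ring
    have d2 : dist (o + e₂ • w) (o + (-M) • w) = (e₂ + M) * ‖w‖ := by
      rw [dist_eq_norm, show o + e₂ • w - (o + (-M) • w) = (e₂ + M) • w from by module,
        norm_smul, Real.norm_eq_abs, abs_of_pos hpe2]
    have d3 : dist (o + e₁ • w) (o + (-M) • w) = (e₁ + M) * ‖w‖ := by
      rw [dist_eq_norm, show o + e₁ • w - (o + (-M) • w) = (e₁ + M) • w from by module,
        norm_smul, Real.norm_eq_abs, abs_of_pos hpe1]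
    have d4 : dist (o + e₂ • w) (o + P • w) = (P - e₂) * ‖w‖ := by
      rw [dist_eq_norm, show o + e₂ • w - (o + P • w) = (e₂ - P) • w from by module,
        norm_smul, Real.norm_eq_abs, abs_of_neg (by linarith : e₂ - P < 0)]
      ring
    have := hd.2 _ h1X _ h2X hne _ hBm _ hBp seg1 seg2
    rw [this, d1, d2, d3, d4]
    rw [show (P - e₁) * ‖w‖ * ((e₂ + M) * ‖w‖) / ((e₁ + M) * ‖w‖ * ((P - e₂) * ‖w‖))
        = ((P - e₁) * (e₂ + M)) / ((e₁ + M) * (P - e₂)) from by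
      field_simp]
    rw [Real.log_div (by positivity) (by positivity),
      Real.log_mul (by positivity) (by positivity),
      Real.log_mul (by positivity) (by positivity)]
    ring
  set L : ℝ → ℝ := fun e => Real.log (e + M) - Real.log (P - e) with hLdef
  have Lmono : ∀ e₁ e₂ : ℝ, -M < e₁ → e₁ < e₂ → e₂ < P → L e₁ < L e₂ := by
    intro e₁ e₂ hm1 h12 h2P
    have h1 : Real.log (e₁ + M) < Real.log (e₂ + M) :=
      Real.log_lt_log (by linarith) (by linarith)
    have h2 : Real.log (P - e₂) < Real.log (P - e₁) :=
      Real.log_lt_log (by linarith) (by linarith)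
    simp only [hLdef]
    linarith
  have eft : ef t = 1 := by
    have h1 := hef t ht
    have h2 : ℓ t = o + (1:ℝ) • w := by rw [hwdef]; module
    rw [h2] at h1
    have h3 : (1 - ef t) • w = 0 := by
      rw [show (1 - ef t) • w = (o + (1:ℝ) • w) - (o + ef t • w) from by module, ← h1]
      simp
    rcases smul_eq_zero.1 h3 with h | h
    · linarith [sub_eq_zero.1 (by linarith : 1 - ef t = (0:ℝ))]
    · exact absurd h hw
  have ef0 : ef 0 = 0 := by
    have h1 := hef 0 le_rfl
    rw [h0] at h1
    have h3 : ef 0 • w = 0 := by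
      rw [show ef 0 • w = (o + ef 0 • w) - o from by module, ← h1]
      simp
    rcases smul_eq_zero.1 h3 with h | h
    · exact h
    · exact absurd h hw
  have efrange : ∀ τ : ℝ, 0 ≤ τ → -M < ef τ ∧ ef τ < P := by
    intro τ hτ
    have := hmem τ hτ
    rw [hef τ hτ] at this
    exact range _ this
  have hMP0 : -M < 0 := by linarith
  have h0P : (0:ℝ) < P := hP
  have h1P' : (1:ℝ) < P := by
    have := (efrange t ht).2; rwa [eft] at this
  have dL : ∀ τ τ' : ℝ, 0 ≤ τ → 0 ≤ τ' → |τ' - τ| = |L (ef τ') - L (ef τ)| := by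
    intro τ τ' hτ hτ'
    have hXτ : o + ef τ • w ∈ X := by rw [← hef τ hτ]; exact hmem τ hτ
    have hXτ' : o + ef τ' • w ∈ X := by rw [← hef τ' hτ']; exact hmem τ' hτ'
    rcases lt_trichotomy (ef τ) (ef τ') with h | h | h
    · have hc := chord (ef τ) (ef τ') (efrange τ hτ).1 h (efrange τ' hτ').2 hXτ hXτ'
      rw [← hef τ hτ, ← hef τ' hτ'] at hc
      rw [abs_sub_comm, ← hdist τ τ' hτ hτ', hc]
      rw [abs_of_pos (by
        have := Lmono (ef τ) (ef τ') (efrange τ hτ).1 h (efrange τ' hτ').2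
        simp only [hLdef] at this ⊢
        linarith)]
      try simp only [hLdef]
    · have heq : ℓ τ = ℓ τ' := by rw [hef τ hτ, hef τ' hτ', h]
      have hd0 : (0:ℝ) = |τ - τ'| := by
        rw [← hdist τ τ' hτ hτ', heq, hd.1 _ (hmem τ' hτ')]
      have hττ' : τ - τ' = 0 := abs_eq_zero.1 hd0.symm
      rw [h, sub_self, abs_zero, show τ' - τ = 0 from by linarith, abs_zero]
    · have hc := chord (ef τ') (ef τ) (efrange τ' hτ').1 h (efrange τ hτ).2 hXτ' hXτ
      rw [← hef τ hτ, ← hef τ' hτ'] at hc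
      rw [← hdist τ' τ hτ' hτ, hc]
      rw [abs_of_neg (by
        have := Lmono (ef τ') (ef τ) (efrange τ' hτ').1 h (efrange τ hτ).2
        simp only [hLdef] at this ⊢
        linarith)]
      try simp only [hLdef]
      try ring
  have Lt : L 1 - L 0 = t := by
    have h1 := dL 0 t le_rfl ht
    rw [ef0, eft, sub_zero, abs_of_nonneg ht] at h1
    have h2 : L 0 < L 1 := Lmono 0 1 hMP0 one_pos h1P'
    rw [abs_of_pos (by linarith)] at h1
    linarith
  have Msign : ∀ τ : ℝ, 0 ≤ τ → τ ≤ t → L (ef τ) - L 0 = τ := by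
    intro τ hτ hτt
    have h1 := dL 0 τ le_rfl hτ
    rw [ef0, sub_zero, abs_of_nonneg hτ] at h1
    have h2 := dL τ t hτ ht
    rw [eft, abs_of_nonneg (by linarith : (0:ℝ) ≤ t - τ)] at h2
    rcases (abs_eq hτ).1 h1.symm with hA | hA
    · exact hA
    · have hLτ : L (ef τ) = L 0 - τ := by linarith
      rw [hLτ] at h2
      rw [show L 1 - (L 0 - τ) = t + τ from by linarith] at h2
      rw [abs_of_nonneg (by linarith)] at h2
      have hτ0 : τ = 0 := by linarith
      rw [hτ0] at hA ⊢
      linarith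
  have Linj : ∀ a b : ℝ, -M < a → a < P → -M < b → b < P → L a = L b → a = b := by
    intro a b ha1 ha2 hb1 hb2 hab
    rcases lt_trichotomy a b with h | h | h
    · exact absurd hab (ne_of_lt (Lmono a b ha1 h hb2))
    · exact h
    · exact absurd hab.symm (ne_of_lt (Lmono b a hb1 h ha2))
  constructor
  · intro s hs hst
    refine ⟨ef s, ?_, ?_, hef s hs⟩
    · by_contra hneg
      push_neg at hneg
      have := Lmono (ef s) 0 (efrange s hs).1 hneg h0P
      have hM1 := Msign s hs hst
      linarith
    · by_contra hneg
      push_neg at hneg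
      have := Lmono 1 (ef s) (by linarith) hneg (efrange s hs).2
      have hM1 := Msign s hs hst
      linarith
  · intro μ hμ0 hμ1
    have hμm : -M < μ := by linarith
    have hμP : μ < P := by linarith
    have hτ0 : 0 ≤ L μ - L 0 := by
      rcases eq_or_lt_of_le hμ0 with h | h
      · rw [← h]; simp
      · linarith [Lmono 0 μ hMP0 h hμP]
    have hτt : L μ - L 0 ≤ t := by
      rcases eq_or_lt_of_le hμ1 with h | h
      · rw [h]; linarith
      · linarith [Lmono μ 1 hμm h h1P']
    have hsign := Msign (L μ - L 0) hτ0 hτt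
    have hLeq : L (ef (L μ - L 0)) = L μ := by linarith
    have hefτ : ef (L μ - L 0) = μ :=
      Linj _ _ (efrange _ hτ0).1 (efrange _ hτ0).2 hμm hμP hLeq
    exact ⟨L μ - L 0, hτ0, hτt, by rw [hef _ hτ0, hefτ]⟩
end aux

theorem hilbert_rays_through_close_points
    {n : ℕ} (hn : 2 ≤ n) (X : Set (EuclideanSpace ℝ (Fin n)))
    (hne : X.Nonempty) (hconv : Convex ℝ X) (hopen : IsOpen X)
    (hbdd : Bornology.IsBounded X)
    (d : EuclideanSpace ℝ (Fin n) → EuclideanSpace ℝ (Fin n) → ℝ)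
    (hd : IsHilbertMetric X d)
    (o : EuclideanSpace ℝ (Fin n)) (ho : o ∈ X)
    (r : ℝ) (hr : 0 < r)
    (x y : EuclideanSpace ℝ (Fin n)) (hx : x ∈ X) (hy : y ∈ X)
    (hxy : d x y ≤ r) (hle : d o x ≤ d o y)
    (ℓx ℓy : ℝ → EuclideanSpace ℝ (Fin n))
    (hℓx : IsHilbertRay X d o ℓx) (hℓy : IsHilbertRay X d o ℓy)
    (hxx : ℓx (d o x) = x) (hyy : ℓy (d o y) = y) :
    ∀ s : ℝ, 0 ≤ s → s ≤ d o y → d (ℓx s) (ℓy s) ≤ 2 * r := by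
  intro s hs hsT
  obtain ⟨h0x, hmemx, hdistx, hlinex⟩ := hℓx
  obtain ⟨h0y, hmemy, hdisty, hliney⟩ := hℓy
  have hT0 : 0 ≤ d o y := le_trans hs hsT
  have ht0 : 0 ≤ d o x := hilbert_nonneg hconv hopen hbdd hd ho hx
  obtain ⟨lam, hlam0, hlam1, hq⟩ :=
    (ray_points hconv hopen hbdd hd ho h0y hmemy hdisty hliney (d o y) hT0).1 s hs hsT
  rw [hyy] at hq
  obtain ⟨tstar, hts0, htst, hxstar⟩ :=
    (ray_points hconv hopen hbdd hd ho h0x hmemx hdistx hlinex (d o x) ht0).2 lam hlam0 hlam1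
  rw [hxx] at hxstar
  have hqX : ℓy s ∈ X := hmemy s hs
  have hpX : ℓx s ∈ X := hmemx s hs
  have hxsX : ℓx tstar ∈ X := hmemx tstar hts0
  have hpxs : d (ℓx s) (ℓx tstar) = |s - tstar| := hdistx s tstar hs hts0
  have hoq : d o (ℓy s) = s := by
    have := hdisty 0 s le_rfl hs
    rw [h0y] at this
    rw [this]
    simp [abs_of_nonneg hs]
  have hoxs : d o (ℓx tstar) = tstar := by
    have := hdistx 0 tstar le_rfl hts0
    rw [h0x] at this
    rw [this]
    simp [abs_of_nonneg hts0]
  by_cases hxy' : x = y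
  · have hxq : ℓx tstar = ℓy s := by rw [hxstar, hq, hxy']
    have hts : tstar = s := by rw [← hoxs, hxq, hoq]
    have : d (ℓx s) (ℓy s) = 0 := by
      rw [← hxq, hpxs, hts]
      simp
    rw [this]
    linarith
  · obtain ⟨σ₁, σ₂, hσ1, hσ1', hσ2, hσ2', hF, hR, hprod⟩ :=
      hilbert_extract hconv hopen hbdd hd hx hy hxy'
    have hFc := hF.contract hconv ho hlam0 hlam1
    have hRc := hR.contract hconv ho hlam0 hlam1
    rw [← hxstar, ← hq] at hFc hRc
    have hlogeq : -Real.log (σ₁ * σ₂) = d x y := by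
      rw [hprod, Real.log_exp]; ring
    have hdxq : d (ℓx tstar) (ℓy s) ≤ d x y := by
      have := hilbert_eval hconv hopen hbdd hd hxsX hqX hσ1 hσ1'.le hσ2 hσ2'.le hFc hRc
      linarith [hlogeq]
    have hdqx : d (ℓy s) (ℓx tstar) ≤ d x y := by
      have := hilbert_eval hconv hopen hbdd hd hqX hxsX hσ2 hσ2'.le hσ1 hσ1'.le
        hRc.flip hFc.flip
      have hcomm : -Real.log (σ₂ * σ₁) = d x y := by rw [mul_comm]; exact hlogeq
      linarith
    have h1 : d o (ℓx tstar) ≤ d o (ℓy s) + d (ℓy s) (ℓx tstar) :=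
      hilbert_triangle hconv hopen hbdd hd ho hqX hxsX
    have h2 : d o (ℓy s) ≤ d o (ℓx tstar) + d (ℓx tstar) (ℓy s) :=
      hilbert_triangle hconv hopen hbdd hd ho hxsX hqX
    have habs : |s - tstar| ≤ r := by
      rw [hoq, hoxs] at h1 h2
      rw [abs_le]
      constructor <;> linarith
    have h3 : d (ℓx s) (ℓy s) ≤ d (ℓx s) (ℓx tstar) + d (ℓx tstar) (ℓy s) :=
      hilbert_triangle hconv hopen hbdd hd hpX hxsX hqX
    rw [hpxs] at h3
    linarith
end
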